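/- arXiv:0901.3005 — 2 statements merged into one kernel-verified Lean document; each statement's English description precedes it below -/
import Mathlib

section
/- Let k be a field of characteristic 2 and R = k[a,b,c,d]/(ad - bc - 1). The element ad does not lie in the subring B = k[ab, cd], and more generally for every r ≥ 0, (ad)^(2^r) ∉ B. -/
/-!
The automorphism `σ` of `R` swapping `a ↔ b` and `c ↔ d` is well defined because in characteristic
`2` it fixes `ad - bc - 1`. It fixes `ab` and `cd`, hence all of `B = k[ab, cd]`, but sends `ad` to
`bc = ad - 1`. By the Frobenius, `(ad)^(2^r) - σ((ad)^(2^r)) = (ad - bc)^(2^r) = 1 ≠ 0`, so no power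
`(ad)^(2^r)` is fixed by `σ`, and none lies in `B`.
-/

open MvPolynomial

noncomputable section

/-- The polynomial ring `k[a,b,c,d]` (variables indexed by `Fin 4`). -/
abbrev P (k : Type*) [Field k] := MvPolynomial (Fin 4) k

/-- The ideal `(ad - bc - 1)`. -/
def sl2Rel (k : Type*) [Field k] : Ideal (P k) :=
  Ideal.span {X 0 * X 3 - X 1 * X 2 - 1}

/-- `R = k[a,b,c,d]/(ad - bc - 1)`, the coordinate ring of `SL₂`. -/
abbrev R (k : Type*) [Field k] := P k ⧸ sl2Rel k

def va (k : Type*) [Field k] : R k := Ideal.Quotient.mk _ (X 0)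
def vb (k : Type*) [Field k] : R k := Ideal.Quotient.mk _ (X 1)
def vc (k : Type*) [Field k] : R k := Ideal.Quotient.mk _ (X 2)
def vd (k : Type*) [Field k] : R k := Ideal.Quotient.mk _ (X 3)

theorem pow_expChar_pow_notMem_adjoin_of_sub_algHom_eq_one {k A : Type*} [CommRing k]
    [CommRing A] [Nontrivial A] [Algebra k A] (p : ℕ) [ExpChar A p] (σ : A →ₐ[k] A) {s : Set A}
    (hs : Set.EqOn σ (AlgHom.id k A) s) {x : A} (hx : x - σ x = 1) (r : ℕ) :
    x ^ p ^ r ∉ Algebra.adjoin k s := by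
  intro hmem
  have hfix : σ (x ^ p ^ r) = x ^ p ^ r := AlgHom.adjoin_le_equalizer σ _ hs hmem
  refine one_ne_zero (α := A) ?_
  calc (1 : A) = (x - σ x) ^ p ^ r := by rw [hx, one_pow]
    _ = x ^ p ^ r - σ (x ^ p ^ r) := by rw [sub_pow_expChar_pow, map_pow]
    _ = 0 := by rw [hfix, sub_self]

section

variable (k : Type*) [Field k]

theorem sl2Rel_le_ker_eval_id : sl2Rel k ≤ RingHom.ker (eval ![1, 0, 0, 1]) :=
  Ideal.span_le.2 <| Set.singleton_subset_iff.2 <| by simp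

instance : Nontrivial (R k) :=
  Ideal.Quotient.nontrivial_iff.2 <|
    ne_top_of_le_ne_top (RingHom.ker_ne_top _) (sl2Rel_le_ker_eval_id k)

theorem va_mul_vd_sub_vb_mul_vc : va k * vd k - vb k * vc k = 1 := by
  rw [← sub_eq_zero, va, vb, vc, vd, ← map_mul, ← map_mul, ← map_sub,
    ← map_one (Ideal.Quotient.mk _), ← map_sub, Ideal.Quotient.eq_zero_iff_mem]
  exact Ideal.subset_span rfl

def swapIndex : Fin 4 → Fin 4 := ![1, 0, 3, 2]

variable [CharP k 2]

instance : ExpChar (R k) 2 :=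
  have : ExpChar k 2 := ExpChar.prime Nat.prime_two
  expChar_of_injective_algebraMap (algebraMap k (R k)).injective 2

theorem rename_swapIndex_sl2_generator :
    rename swapIndex (X 0 * X 3 - X 1 * X 2 - 1 : P k) = X 0 * X 3 - X 1 * X 2 - 1 := by
  have h2 : (2 : P k) = 0 := CharTwo.two_eq_zero
  simp only [map_sub, map_mul, map_one, rename_X, swapIndex, Matrix.cons_val]
  linear_combination (X 1 * X 2 - X 0 * X 3) * h2

/-- The automorphism `σ` of `R`: `a ↔ b`, `c ↔ d`. -/
def sl2Swap : R k →ₐ[k] R k :=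
  Ideal.quotientMapₐ (sl2Rel k) (rename swapIndex) <| Ideal.span_le.2 <|
    Set.singleton_subset_iff.2 <| by
      rw [SetLike.mem_coe, Ideal.mem_comap, rename_swapIndex_sl2_generator]
      exact Ideal.subset_span rfl

theorem sl2Swap_mk (p : P k) :
    sl2Swap k (Ideal.Quotient.mk _ p) = Ideal.Quotient.mk _ (rename swapIndex p) :=
  rfl

theorem sl2Swap_va_mul_vd : sl2Swap k (va k * vd k) = vb k * vc k := by
  rw [va, vb, vc, vd, ← map_mul, ← map_mul, sl2Swap_mk]
  simp [swapIndex]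

theorem sl2Swap_va_mul_vb : sl2Swap k (va k * vb k) = va k * vb k := by
  rw [va, vb, ← map_mul, sl2Swap_mk]
  simp [swapIndex, mul_comm]

theorem sl2Swap_vc_mul_vd : sl2Swap k (vc k * vd k) = vc k * vd k := by
  rw [vc, vd, ← map_mul, sl2Swap_mk]
  simp [swapIndex, mul_comm]

end

/-- `ad ∉ B = k[ab, cd]`, and more generally, for every `r ≥ 0`,
`(ad)^(2^r) ∉ B`. -/
theorem stmt8 (k : Type*) [Field k] [CharP k 2] :
    va k * vd k ∉ Algebra.adjoin k {va k * vb k, vc k * vd k} ∧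
    ∀ r : ℕ, (va k * vd k) ^ (2 ^ r) ∉ Algebra.adjoin k {va k * vb k, vc k * vd k} := by
  have hB : Set.EqOn (sl2Swap k) (AlgHom.id k (R k)) {va k * vb k, vc k * vd k} := by
    rintro _ (rfl | rfl)
    exacts [sl2Swap_va_mul_vb k, sl2Swap_vc_mul_vd k]
  have hx : va k * vd k - sl2Swap k (va k * vd k) = 1 := by
    rw [sl2Swap_va_mul_vd, va_mul_vd_sub_vb_mul_vc]
  have key := pow_expChar_pow_notMem_adjoin_of_sub_algHom_eq_one 2 (sl2Swap k) hB hx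
  exact ⟨by simpa using key 0, key⟩
end
end

section
/- Let k be a field of characteristic 2 and R = k[a,b,c,d]/(ad - bc - 1). The subalgebra generated by c and d, i.e. k[c,d] ⊆ R, is a polynomial ring: the map k[X,Y] → R, X ↦ c, Y ↦ d is injective. -/
/-!
Since `Y⁻¹ · Y - 0 · X = 1`, the assignment `a ↦ Y⁻¹, b ↦ 0, c ↦ X, d ↦ Y` defines a map
`R → Frac k[X,Y]`; composed with `X ↦ c, Y ↦ d` it is the injective inclusion `k[X,Y] → Frac k[X,Y]`.
-/

open MvPolynomial

noncomputable section

section Lift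

variable {k : Type*} [Field k] {S : Type*} [CommRing S] [Algebra k S]

def sl2Lift (x : Fin 4 → S) (hx : x 0 * x 3 - x 1 * x 2 = 1) : R k →ₐ[k] S :=
  Ideal.Quotient.liftₐ (sl2Rel k) (aeval x) fun p hp => by
    obtain ⟨q, rfl⟩ := Ideal.mem_span_singleton'.mp hp
    simp [hx]

theorem sl2Lift_mk_X (x : Fin 4 → S) (hx : x 0 * x 3 - x 1 * x 2 = 1) (i : Fin 4) :
    sl2Lift x hx (Ideal.Quotient.mk (sl2Rel k) (X i)) = x i :=
  aeval_X x i

end Lift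

theorem stmt14_general (k : Type*) [Field k] :
    Function.Injective
      (MvPolynomial.aeval (fun i : Fin 2 => if i = 0 then vc k else vd k) :
        MvPolynomial (Fin 2) k →ₐ[k] R k) := by
  let K := FractionRing (MvPolynomial (Fin 2) k)
  let ι := IsScalarTower.toAlgHom k (MvPolynomial (Fin 2) k) K
  have hY : ι (X 1) ≠ 0 :=
    (map_ne_zero_iff _ (IsFractionRing.injective _ K)).mpr (X_ne_zero 1)
  let ψ : R k →ₐ[k] K := sl2Lift ![(ι (X 1))⁻¹, 0, ι (X 0), ι (X 1)] (by simp [inv_mul_cancel₀ hY])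
  have hcomp : ψ.comp (aeval fun i : Fin 2 => if i = 0 then vc k else vd k) = ι := by
    refine algHom_ext fun i => ?_
    fin_cases i <;> simp [ψ, vc, vd, sl2Lift_mk_X]
  refine Function.Injective.of_comp (f := ψ) ?_
  rw [← AlgHom.coe_comp, hcomp]
  exact IsFractionRing.injective _ K

/-- The `k`-algebra map `k[X,Y] → R`, `X ↦ c`, `Y ↦ d`, is injective,
so `k[c,d] ⊆ R` is a polynomial ring in two variables. -/
theorem stmt14 (k : Type*) [Field k] [CharP k 2] :
    Function.Injective
      (MvPolynomial.aeval (fun i : Fin 2 => if i = 0 then vc k else vd k) :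
        MvPolynomial (Fin 2) k →ₐ[k] R k) :=
  stmt14_general k
end
end
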